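/- Let C be a category with zero morphisms, discarding, split kernels and cokernels (every causal kernel k has a unique co-causal cokernel k♯ with k♯ ∘ k = id, and conversely), satisfying strong pure exclusion and the implications ⊤_A = 0 ⟹ ⊥_A = 0 ⟹ id_A = 0. Then every causal pure state ψ : I → A is a kernel (namely ψ = im(ψ) = ker(coker(ψ)) up to causal isomorphism). -/

import Mathlib

/-!
Factor `ψ = h ≫ k` through `k = ker (coker ψ)`, which splits with retraction `r`. Then `h` is a
causal pure state of `K`, and an effect `e` with `h ≫ e = 0` vanishes: `r ≫ e` kills `ψ`, so it
factors through `coker ψ`, and `e = k ≫ r ≫ e` factors through `k ≫ coker ψ = 0`. Pure exclusion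
therefore makes `K` trivial, so the causal state `h` is `⊥_K` and is inverse to `⊤_K`; hence `ψ`
is, up to this isomorphism, the kernel `k` of `coker ψ`.
-/

open CategoryTheory MonoidalCategory Limits

variable {C : Type*} [Category C] [MonoidalCategory C] [SymmetricCategory C]

/-- A morphism is causal when discarding after it is discarding. -/
def Causal (top : ∀ A : C, A ⟶ 𝟙_ C) {X Y : C} (f : X ⟶ Y) : Prop :=
  f ≫ top Y = top X

/-- A morphism is co-causal when it maps the completely mixed state to the
completely mixed state. -/
def CoCausal (bot : ∀ A : C, 𝟙_ C ⟶ A) {X Y : C} (f : X ⟶ Y) : Prop :=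
  bot X ≫ f = bot Y

/-- A morphism `f : A ⟶ B` is pure when `f = 0` or every dilation
`g : A ⟶ B ⊗ E` of `f` is of the form `f ⊗ σ` for a causal state `σ`. -/
def IsPure [HasZeroMorphisms C] (top : ∀ A : C, A ⟶ 𝟙_ C) {A B : C}
    (f : A ⟶ B) : Prop :=
  f = 0 ∨ ∀ (E : C) (g : A ⟶ B ⊗ E), g ≫ (𝟙 B ⊗ₘ top E) ≫ (ρ_ B).hom = f →
    ∃ σ : 𝟙_ C ⟶ E, σ ≫ top E = 𝟙 (𝟙_ C) ∧ g = f ≫ (ρ_ B).inv ≫ (𝟙 B ⊗ₘ σ)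

/-- `k : K ⟶ A` is a causal kernel: it is causal and is a kernel of some
morphism out of `A`. -/
def IsCausalKernel [HasZeroMorphisms C] (top : ∀ A : C, A ⟶ 𝟙_ C)
    {K A : C} (k : K ⟶ A) : Prop :=
  Causal top k ∧ ∃ (B : C) (f : A ⟶ B), k ≫ f = 0 ∧
    ∀ (X : C) (g : X ⟶ A), g ≫ f = 0 → ∃! h : X ⟶ K, g = h ≫ k

/-- `c : A ⟶ Q` is a co-causal cokernel: it is co-causal and is a cokernel of
some morphism into `A`. -/
def IsCoCausalCokernel [HasZeroMorphisms C] (bot : ∀ A : C, 𝟙_ C ⟶ A)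
    {A Q : C} (c : A ⟶ Q) : Prop :=
  CoCausal bot c ∧ ∃ (B : C) (f : B ⟶ A), f ≫ c = 0 ∧
    ∀ (X : C) (g : A ⟶ X), f ≫ g = 0 → ∃! h : Q ⟶ X, g = c ≫ h

/-- An object is trivial when its identity factors as `⊥_A ∘ ⊤_A`. -/
def Trivial (top : ∀ A : C, A ⟶ 𝟙_ C) (bot : ∀ A : C, 𝟙_ C ⟶ A) (A : C) : Prop :=
  𝟙 A = top A ≫ bot A

section Kernels

omit [MonoidalCategory C] [SymmetricCategory C]

variable [HasZeroMorphisms C]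

def IsKernelOf {K A B : C} (k : K ⟶ A) (f : A ⟶ B) : Prop :=
  k ≫ f = 0 ∧ ∀ (X : C) (g : X ⟶ A), g ≫ f = 0 → ∃! h : X ⟶ K, g = h ≫ k

def IsCokernelOf {B A Q : C} (f : B ⟶ A) (c : A ⟶ Q) : Prop :=
  f ≫ c = 0 ∧ ∀ (X : C) (g : A ⟶ X), f ≫ g = 0 → ∃! h : Q ⟶ X, g = c ≫ h

theorem IsKernelOf.iso_comp {X K A B : C} {k : K ⟶ A} {f : A ⟶ B} (hk : IsKernelOf k f)
    (e : X ≅ K) : IsKernelOf (e.hom ≫ k) f := by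
  refine ⟨by rw [Category.assoc, hk.1, comp_zero], fun Y g hg => ?_⟩
  obtain ⟨u, rfl, hu⟩ := hk.2 Y g hg
  refine ⟨u ≫ e.inv, by simp, fun v hv => ?_⟩
  have hvu : v ≫ e.hom = u := hu _ (by simpa using hv)
  simp [← hvu]

theorem eq_zero_of_comp_eq_zero_of_factor_through_kernel {X A Q K Y : C} {ψ : X ⟶ A}
    {c : A ⟶ Q} (hc : IsCokernelOf ψ c) {k : K ⟶ A} (hkc : k ≫ c = 0) {r : A ⟶ K}
    (hkr : k ≫ r = 𝟙 K) {h : X ⟶ K} (hψ : h ≫ k = ψ) {e : K ⟶ Y} (he : h ≫ e = 0) :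
    e = 0 := by
  obtain ⟨m, hm, -⟩ := hc.2 Y (r ≫ e) (by rw [← hψ, Category.assoc, reassoc_of% hkr, he])
  rw [← Category.id_comp e, ← hkr, Category.assoc, hm, reassoc_of% hkc, zero_comp]

end Kernels

section Purity

omit [SymmetricCategory C]

variable {top : ∀ A : C, A ⟶ 𝟙_ C}

theorem Trivial.top_comp_eq_id {bot : ∀ A : C, 𝟙_ C ⟶ A} {K : C} (hK : Trivial top bot K)
    {h : 𝟙_ C ⟶ K} (hh : h ≫ top K = 𝟙 (𝟙_ C)) : top K ≫ h = 𝟙 K := by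
  have hh_bot : h = bot K := by
    rw [← Category.comp_id h, hK, reassoc_of% hh]
  rw [hh_bot, hK]

variable [HasZeroMorphisms C]

/-- A dilation `g` of `h` yields the dilation `g ≫ (k ▷ E)` of `f = h ≫ k`, and `r ▷ E` carries
its factorisation back. -/
theorem IsPure.of_comp_retraction {X K A : C} {f : X ⟶ A} (hf : IsPure top f) {k : K ⟶ A}
    {r : A ⟶ K} (hkr : k ≫ r = 𝟙 K) {h : X ⟶ K} (hh : h ≫ k = f) : IsPure top h := by
  rcases hf with rfl | hf
  · left
    rw [← Category.comp_id h, ← hkr, reassoc_of% hh, zero_comp]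
  right
  intro E g hg
  obtain ⟨σ, hσ, hgσ⟩ := hf E (g ≫ k ▷ E) (by
    rw [← hh, ← hg, id_tensorHom, id_tensorHom, Category.assoc, ← whisker_exchange_assoc,
      rightUnitor_naturality, Category.assoc, Category.assoc])
  refine ⟨σ, hσ, ?_⟩
  have hg_retract : g = (g ≫ k ▷ E) ≫ r ▷ E := by
    rw [Category.assoc, ← comp_whiskerRight, hkr, id_whiskerRight, Category.comp_id]
  rw [hg_retract, hgσ, ← hh, id_tensorHom, id_tensorHom, Category.assoc, Category.assoc, Category.assoc,
    whisker_exchange, ← rightUnitor_inv_naturality_assoc, reassoc_of% hkr]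

end Purity

theorem stmt_16_general [HasZeroMorphisms C]
    (top : ∀ A : C, A ⟶ 𝟙_ C) (bot : ∀ A : C, 𝟙_ C ⟶ A)
    (htop_unit : top (𝟙_ C) = 𝟙 (𝟙_ C))
    -- every morphism has a causal kernel and a co-causal cokernel
    (hker : ∀ {A B : C} (f : A ⟶ B), ∃ (K : C) (k : K ⟶ A),
      Causal top k ∧ k ≫ f = 0 ∧
        ∀ (X : C) (g : X ⟶ A), g ≫ f = 0 → ∃! h : X ⟶ K, g = h ≫ k)
    (hcoker : ∀ {A B : C} (f : A ⟶ B), ∃ (Q : C) (c : B ⟶ Q),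
      CoCausal bot c ∧ f ≫ c = 0 ∧
        ∀ (X : C) (g : B ⟶ X), f ≫ g = 0 → ∃! h : Q ⟶ X, g = c ≫ h)
    -- split kernels and cokernels
    (hsplit : ∀ {K A : C} (k : K ⟶ A), IsCausalKernel top k →
      ∃! c : A ⟶ K, IsCoCausalCokernel bot c ∧ k ≫ c = 𝟙 K)
    -- strong pure exclusion
    (hPE : ∀ (A : C), ¬ Trivial top bot A → ∀ ψ : 𝟙_ C ⟶ A, IsPure top ψ →
      ∃ e : A ⟶ 𝟙_ C, e ≠ 0 ∧ ψ ≫ e = 0)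
    -- a causal pure state
    {A : C} (ψ : 𝟙_ C ⟶ A) (hcausal : Causal top ψ) (hpure : IsPure top ψ) :
    IsCausalKernel top ψ := by
  obtain ⟨Q, c, -, hc⟩ := hcoker ψ
  obtain ⟨K, k, hk_causal, hk⟩ := hker c
  obtain ⟨r, ⟨-, hkr⟩, -⟩ := hsplit k ⟨hk_causal, Q, c, hk⟩
  obtain ⟨h, hψ, -⟩ := hk.2 _ ψ hc.1
  have h_causal : h ≫ top K = 𝟙 (𝟙_ C) := by
    rw [← htop_unit, ← hcausal, hψ, Category.assoc, hk_causal]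
  have hK : Trivial top bot K := by
    by_contra hK
    obtain ⟨e, he, hhe⟩ := hPE K hK h (hpure.of_comp_retraction hkr hψ.symm)
    exact he (eq_zero_of_comp_eq_zero_of_factor_through_kernel hc hk.1 hkr hψ.symm hhe)
  let hIK : 𝟙_ C ≅ K := ⟨h, top K, h_causal, hK.top_comp_eq_id h_causal⟩
  refine ⟨hcausal, Q, c, ?_⟩
  rw [hψ]
  exact IsKernelOf.iso_comp hk hIK

/-- Let `C` have zero morphisms, discarding `⊤` and completely
mixed states `⊥`, split kernels and cokernels (every morphism has a causal
kernel and a co-causal cokernel; every causal kernel `k` has a unique co-causal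
cokernel `k♯` with `k♯ ∘ k = id`, and conversely `k` is the unique causal kernel
with this property), satisfying strong pure exclusion and the implications
`⊤_A = 0 ⟹ ⊥_A = 0 ⟹ id_A = 0`. Then every causal pure state `ψ : I ⟶ A` is a
(causal) kernel. -/
theorem stmt_16 [HasZeroMorphisms C]
    (top : ∀ A : C, A ⟶ 𝟙_ C) (bot : ∀ A : C, 𝟙_ C ⟶ A)
    (htop_tensor : ∀ A B : C, top (A ⊗ B) = (top A ⊗ₘ top B) ≫ (λ_ (𝟙_ C)).hom)
    (htop_unit : top (𝟙_ C) = 𝟙 (𝟙_ C))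
    (hbot_tensor : ∀ A B : C, bot (A ⊗ B) = (λ_ (𝟙_ C)).inv ≫ (bot A ⊗ₘ bot B))
    (hbot_unit : bot (𝟙_ C) = 𝟙 (𝟙_ C))
    -- every morphism has a causal kernel and a co-causal cokernel
    (hker : ∀ {A B : C} (f : A ⟶ B), ∃ (K : C) (k : K ⟶ A),
      Causal top k ∧ k ≫ f = 0 ∧
        ∀ (X : C) (g : X ⟶ A), g ≫ f = 0 → ∃! h : X ⟶ K, g = h ≫ k)
    (hcoker : ∀ {A B : C} (f : A ⟶ B), ∃ (Q : C) (c : B ⟶ Q),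
      CoCausal bot c ∧ f ≫ c = 0 ∧
        ∀ (X : C) (g : B ⟶ X), f ≫ g = 0 → ∃! h : Q ⟶ X, g = c ≫ h)
    -- split kernels and cokernels
    (hsplit : ∀ {K A : C} (k : K ⟶ A), IsCausalKernel top k →
      ∃! c : A ⟶ K, IsCoCausalCokernel bot c ∧ k ≫ c = 𝟙 K)
    (hsplit' : ∀ {K A : C} (k k' : K ⟶ A) (c : A ⟶ K),
      IsCausalKernel top k → IsCausalKernel top k' →
      IsCoCausalCokernel bot c → k ≫ c = 𝟙 K → k' ≫ c = 𝟙 K → k' = k)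
    -- strong pure exclusion
    (hPE : ∀ (A : C), ¬ Trivial top bot A → ∀ ψ : 𝟙_ C ⟶ A, IsPure top ψ →
      ∃ e : A ⟶ 𝟙_ C, e ≠ 0 ∧ ψ ≫ e = 0)
    (hPE' : ∀ (A : C), ¬ Trivial top bot A → ∀ φ : A ⟶ 𝟙_ C, IsPure top φ →
      ∃ ρ : 𝟙_ C ⟶ A, ρ ≠ 0 ∧ ρ ≫ φ = 0)
    -- ⊤_A = 0 ⟹ ⊥_A = 0 ⟹ id_A = 0
    (h0 : ∀ A : C, top A = 0 → bot A = 0) (h0' : ∀ A : C, bot A = 0 → 𝟙 A = 0)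
    -- a causal pure state
    {A : C} (ψ : 𝟙_ C ⟶ A) (hcausal : Causal top ψ) (hpure : IsPure top ψ) :
    IsCausalKernel top ψ :=
  stmt_16_general top bot htop_unit hker hcoker hsplit hPE ψ hcausal hpure
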